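/- There exists exactly one real number t0 in the open interval I = (θ, −13) with s(t0) = 2; this t0 satisfies u12(t0) = 0, where u12(x) = 45678110765558881 + 6234622186059196x − 4142454922929870x^2 − 804497641938708x^3 + 33981103268895x^4 + 15022950168312x^5 + 496259775228x^6 − 87343156680x^7 − 6119479377x^8 − 32085428x^9 + 16838386x^10 + 1138140x^11 + 3249x^12, and −13.031 < t0 < −13.030. -/

import Mathlib

/-! On (-28, -13) the equation s t = 2 amounts to ps1 - 196 q5 = -ps2 ω with both sides positive,
so squaring loses nothing; squared, it factors as u12 · v8 = 0 with v8 < 0 there. Since u12 is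
strictly increasing on (-28, -13) and changes sign on (-13.031, -13.030), it has exactly one
zero there, and θ ∈ (-28, -27] places that interval inside (θ, -13). -/

noncomputable section

def ω (t : ℝ) : ℝ := Real.sqrt (3 * (506 + 75 * t - t ^ 3))

def q5 (t : ℝ) : ℝ := (t - 11) ^ 2 * (13 + t) ^ 5 * (-1763 + 75 * t + 111 * t ^ 2 + t ^ 3)

def ps1 (t : ℝ) : ℝ :=
  -430297163879 - 140961934838 * t - 23363774235 * t ^ 2 - 3595306632 * t ^ 3 -
    594107646 * t ^ 4 - 113195268 * t ^ 5 - 1046526 * t ^ 6 + 1347960 * t ^ 7 +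
    171621 * t ^ 8 - 10742 * t ^ 9 + 25 * t ^ 10

def ps2 (t : ℝ) : ℝ :=
  -96 * (-94197721 - 28304354 * t - 6941146 * t ^ 2 - 1190186 * t ^ 3 - 19228 * t ^ 4 +
    154 * t ^ 5 - 310 * t ^ 6 - 398 * t ^ 7 + 5 * t ^ 8)

def s (t : ℝ) : ℝ := (1 / 7) * Real.sqrt ((ps1 t + ps2 t * ω t) / q5 t)

def u12 (x : ℝ) : ℝ :=
  45678110765558881 + 6234622186059196 * x - 4142454922929870 * x ^ 2 -
    804497641938708 * x ^ 3 + 33981103268895 * x ^ 4 + 15022950168312 * x ^ 5 +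
    496259775228 * x ^ 6 - 87343156680 * x ^ 7 - 6119479377 * x ^ 8 -
    32085428 * x ^ 9 + 16838386 * x ^ 10 + 1138140 * x ^ 11 + 3249 * x ^ 12

def u12' (x : ℝ) : ℝ :=
  6234622186059196 - 8284909845859740 * x - 2413492925816124 * x ^ 2 +
    135924413075580 * x ^ 3 + 75114750841560 * x ^ 4 + 2977558651368 * x ^ 5 -
    611402096760 * x ^ 6 - 48955835016 * x ^ 7 - 288768852 * x ^ 8 +
    168383860 * x ^ 9 + 12519540 * x ^ 10 + 38988 * x ^ 11

def v8 (t : ℝ) : ℝ :=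
  4984951257 + 868588344 * t - 322287732 * t ^ 2 - 79476696 * t ^ 3 - 3328794 * t ^ 4 +
    432072 * t ^ 5 + 45612 * t ^ 6 + 1368 * t ^ 7 + 9 * t ^ 8

theorem differentiable_u12 : Differentiable ℝ u12 := by
  unfold u12
  fun_prop

theorem deriv_u12 : deriv u12 = u12' := by
  ext x
  unfold u12 u12'
  simp (disch := fun_prop)
  ring

theorem eq_mul_sqrt_iff_sq_eq {a b c : ℝ} (ha : 0 ≤ a) (hb : 0 ≤ b) (hc : 0 ≤ c) :
    a = b * √c ↔ a ^ 2 = b ^ 2 * c := by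
  conv_rhs => rw [← Real.sq_sqrt hc, ← mul_pow]
  exact (sq_eq_sq₀ ha (by positivity)).symm

-- The norm of ps1 - 196 q5 + ps2 ω from ℚ(t, ω) down to ℚ(t).
theorem ps1_sub_q5_sq_sub_eq_u12_mul_v8 (t : ℝ) :
    (ps1 t - 196 * q5 t) ^ 2 - ps2 t ^ 2 * (3 * (506 + 75 * t - t ^ 3)) = u12 t * v8 t := by
  unfold q5 ps1 ps2 u12 v8
  ring

theorem s_eq_two_iff {t : ℝ} (hq : q5 t ≠ 0) :
    s t = 2 ↔ ps1 t + ps2 t * ω t = 196 * q5 t := by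
  have hs : s t = 2 ↔ √((ps1 t + ps2 t * ω t) / q5 t) = 14 := by
    rw [s]
    constructor <;> intro h <;> linarith
  rw [hs, Real.sqrt_eq_iff_mul_self_eq_of_pos (by norm_num), eq_div_iff hq]
  constructor <;> intro h <;> linarith

-- With t = -13 - x, 0 < x < 15, the polynomials below become ones in x whose sign is read off
-- from the monomials x ^ k > 0 and x ^ (k + 1) ≤ 15 x ^ k.
theorem exists_eq_neg_thirteen_sub {t : ℝ} (ht : t ∈ Set.Ioo (-28 : ℝ) (-13)) :
    ∃ x : ℝ, 0 < x ∧ x < 15 ∧ t = -13 - x :=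
  ⟨-13 - t, by linarith [ht.2], by linarith [ht.1], by ring⟩

theorem cubic_factor_q5_pos {t : ℝ} (ht : t ∈ Set.Ioo (-28 : ℝ) (-13)) :
    0 < -1763 + 75 * t + 111 * t ^ 2 + t ^ 3 := by
  obtain ⟨x, hx0, hx15, rfl⟩ := exists_eq_neg_thirteen_sub ht
  nlinarith [pow_pos hx0 2, pow_pos hx0 3,
    mul_nonneg (pow_pos hx0 2).le (by linarith : (0 : ℝ) ≤ 15 - x)]

theorem q5_neg {t : ℝ} (ht : t ∈ Set.Ioo (-28 : ℝ) (-13)) : q5 t < 0 := by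
  have h13 : 13 + t < 0 := by linarith [ht.2]
  have h11 : t - 11 ≠ 0 := by linarith [ht.2]
  exact mul_neg_of_neg_of_pos
    (mul_neg_of_pos_of_neg (sq_pos_of_ne_zero h11) (Odd.pow_neg (by decide) h13))
    (cubic_factor_q5_pos ht)

theorem radicand_ω_pos {t : ℝ} (ht : t ∈ Set.Ioo (-28 : ℝ) (-13)) :
    0 < 506 + 75 * t - t ^ 3 := by
  obtain ⟨x, hx0, hx15, rfl⟩ := exists_eq_neg_thirteen_sub ht
  nlinarith [pow_pos hx0 2, pow_pos hx0 3]

theorem ps2_neg {t : ℝ} (ht : t ∈ Set.Ioo (-28 : ℝ) (-13)) : ps2 t < 0 := by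
  obtain ⟨x, hx0, hx15, rfl⟩ := exists_eq_neg_thirteen_sub ht
  unfold ps2
  nlinarith [pow_pos hx0 2, pow_pos hx0 3, pow_pos hx0 4, pow_pos hx0 5, pow_pos hx0 6,
    pow_pos hx0 7, pow_pos hx0 8]

theorem q5_lt_ps1 {t : ℝ} (ht : t ∈ Set.Ioo (-28 : ℝ) (-13)) : 196 * q5 t < ps1 t := by
  obtain ⟨x, hx0, hx15, rfl⟩ := exists_eq_neg_thirteen_sub ht
  unfold q5 ps1
  nlinarith [pow_pos hx0 2, pow_pos hx0 3, pow_pos hx0 4, pow_pos hx0 5, pow_pos hx0 6,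
    pow_pos hx0 7, pow_pos hx0 8, pow_pos hx0 9, pow_pos hx0 10,
    mul_nonneg (pow_pos hx0 9).le (by linarith : (0 : ℝ) ≤ 15 - x)]

theorem v8_neg {t : ℝ} (ht : t ∈ Set.Ioo (-28 : ℝ) (-13)) : v8 t < 0 := by
  obtain ⟨x, hx0, hx15, rfl⟩ := exists_eq_neg_thirteen_sub ht
  unfold v8
  nlinarith [pow_pos hx0 4, pow_pos hx0 5, pow_pos hx0 6, pow_pos hx0 7, pow_pos hx0 8,
    mul_nonneg (pow_pos hx0 7).le (by linarith : (0 : ℝ) ≤ 15 - x)]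

theorem u12'_pos {t : ℝ} (ht : t ∈ Set.Ioo (-28 : ℝ) (-13)) : 0 < u12' t := by
  obtain ⟨x, hx0, hx15, rfl⟩ := exists_eq_neg_thirteen_sub ht
  unfold u12'
  nlinarith [pow_pos hx0 2, pow_pos hx0 3, pow_pos hx0 4, pow_pos hx0 5, pow_pos hx0 6,
    pow_pos hx0 7, pow_pos hx0 8, pow_pos hx0 9, pow_pos hx0 10, pow_pos hx0 11,
    mul_nonneg (pow_pos hx0 10).le (by linarith : (0 : ℝ) ≤ 15 - x)]

theorem s_eq_two_iff_u12_eq_zero {t : ℝ} (ht : t ∈ Set.Ioo (-28 : ℝ) (-13)) :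
    s t = 2 ↔ u12 t = 0 := by
  have hq := q5_neg ht
  have hps1 := q5_lt_ps1 ht
  calc s t = 2 ↔ ps1 t + ps2 t * ω t = 196 * q5 t := s_eq_two_iff hq.ne
    _ ↔ ps1 t - 196 * q5 t = -ps2 t * ω t := by constructor <;> intro h <;> linarith
    _ ↔ (ps1 t - 196 * q5 t) ^ 2 = (-ps2 t) ^ 2 * (3 * (506 + 75 * t - t ^ 3)) :=
      eq_mul_sqrt_iff_sq_eq (by linarith) (by linarith [ps2_neg ht])
        (by linarith [radicand_ω_pos ht])
    _ ↔ u12 t * v8 t = 0 := by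
      rw [← ps1_sub_q5_sq_sub_eq_u12_mul_v8, neg_sq, sub_eq_zero]
    _ ↔ u12 t = 0 := by simp [(v8_neg ht).ne]

theorem strictMonoOn_u12 : StrictMonoOn u12 (Set.Ioo (-28 : ℝ) (-13)) := by
  refine strictMonoOn_of_deriv_pos (convex_Ioo _ _) differentiable_u12.continuous.continuousOn
    fun x hx => ?_
  rw [interior_Ioo] at hx
  rw [deriv_u12]
  exact u12'_pos hx

theorem exists_u12_eq_zero : ∃ t ∈ Set.Ioo (-13.031 : ℝ) (-13.030), u12 t = 0 :=
  intermediate_value_Ioo (by norm_num) differentiable_u12.continuous.continuousOn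
    (by unfold u12; norm_num)

theorem neg_28_lt_of_cubic_eq_zero {θ : ℝ} (h : θ ^ 3 + 27 * θ ^ 2 - 93 * θ - 1847 = 0) :
    -28 < θ := by
  by_contra! hθ
  nlinarith [sq_nonneg θ, sq_nonneg (θ + 28)]

theorem le_neg_27_of_le_cubic_roots {θ : ℝ}
    (h : ∀ x : ℝ, x ^ 3 + 27 * x ^ 2 - 93 * x - 1847 = 0 → θ ≤ x) : θ ≤ -27 := by
  obtain ⟨r, hr, hr0⟩ := intermediate_value_Icc (by norm_num : (-28 : ℝ) ≤ -27)
    (f := fun x : ℝ => x ^ 3 + 27 * x ^ 2 - 93 * x - 1847) (by fun_prop)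
    (show (0 : ℝ) ∈ _ by norm_num)
  exact (h r hr0).trans hr.2

/-- there is exactly one t₀ ∈ I = (θ, −13) with s(t₀) = 2; this t₀ satisfies
u₁₂(t₀) = 0 and −13.031 < t₀ < −13.030. -/
theorem stmt6 (θ : ℝ)
    (hθroot : θ ^ 3 + 27 * θ ^ 2 - 93 * θ - 1847 = 0)
    (hθmin : ∀ x : ℝ, x ^ 3 + 27 * x ^ 2 - 93 * x - 1847 = 0 → θ ≤ x) :
    (∃! t0 : ℝ, t0 ∈ Set.Ioo θ (-13 : ℝ) ∧ s t0 = 2) ∧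
    (∀ t0 : ℝ, t0 ∈ Set.Ioo θ (-13 : ℝ) → s t0 = 2 →
      u12 t0 = 0 ∧ -13.031 < t0 ∧ t0 < -13.030) := by
  have hI : Set.Ioo θ (-13) ⊆ Set.Ioo (-28) (-13) :=
    Set.Ioo_subset_Ioo_left (neg_28_lt_of_cubic_eq_zero hθroot).le
  obtain ⟨t0, ⟨hlo, hhi⟩, hroot⟩ := exists_u12_eq_zero
  have ht0 : t0 ∈ Set.Ioo θ (-13) :=
    ⟨by linarith [le_neg_27_of_le_cubic_roots hθmin], by linarith⟩
  have hunique : ∀ t ∈ Set.Ioo θ (-13), s t = 2 → t = t0 := fun t ht hs =>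
    strictMonoOn_u12.injOn (hI ht) (hI ht0)
      (((s_eq_two_iff_u12_eq_zero (hI ht)).1 hs).trans hroot.symm)
  refine ⟨⟨t0, ⟨ht0, (s_eq_two_iff_u12_eq_zero (hI ht0)).2 hroot⟩,
    fun t ht => hunique t ht.1 ht.2⟩, fun t ht hs => ?_⟩
  obtain rfl := hunique t ht hs
  exact ⟨hroot, hlo, hhi⟩
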